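/- Let P be a symmetric positive definite n×n real matrix (with n ≥ 1), R a symmetric positive definite m×m real matrix, H an m×n real matrix, and K* = P·Hᵀ·(H·P·Hᵀ + R)⁻¹ the Kalman gain. Then K* minimizes the smallest eigenvalue of the posterior covariance: for every n×m real matrix K, the smallest eigenvalue of P_{K*} is less than or equal to the smallest eigenvalue of P_K. -/

import Mathlib

open Matrix

/-- The posterior covariance matrix `P_K = (I - K·H)·P·(I - K·H)ᵀ + K·R·Kᵀ`. -/
noncomputable def postCov {n m : ℕ} (P : Matrix (Fin n) (Fin n) ℝ)
    (R : Matrix (Fin m) (Fin m) ℝ) (H : Matrix (Fin m) (Fin n) ℝ)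
    (K : Matrix (Fin n) (Fin m) ℝ) : Matrix (Fin n) (Fin n) ℝ :=
  (1 - K * H) * P * (1 - K * H)ᵀ + K * R * Kᵀ

/-- The Kalman gain `K* = P·Hᵀ·(H·P·Hᵀ + R)⁻¹`. -/
noncomputable def kalmanGain {n m : ℕ} (P : Matrix (Fin n) (Fin n) ℝ)
    (R : Matrix (Fin m) (Fin m) ℝ) (H : Matrix (Fin m) (Fin n) ℝ) :
    Matrix (Fin n) (Fin m) ℝ :=
  P * Hᵀ * (H * P * Hᵀ + R)⁻¹

/-!
With `S = H·P·Hᵀ + R`, completing the square gives `P_K = P_{K*} + (K - K*)·S·(K - K*)ᵀ`, so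
`P_{K*} ≤ P_K` in the Loewner order because `S` is positive definite. The smallest eigenvalue is
monotone for that order: it is the largest `c` with `c • 1 ≤ A`.
-/

open scoped MatrixOrder

namespace Matrix.IsHermitian

variable {𝕜 ι : Type*} [RCLike 𝕜] [Fintype ι] [DecidableEq ι] {A B : Matrix ι ι 𝕜}

theorem algebraMap_le_iff_le_eigenvalues (hA : A.IsHermitian) {c : ℝ} :
    algebraMap ℝ _ c ≤ A ↔ ∀ i, c ≤ hA.eigenvalues i := by
  rw [algebraMap_le_iff_le_spectrum hA, hA.spectrum_real_eq_range_eigenvalues,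
    Set.forall_mem_range]

theorem iInf_eigenvalues_le_of_le (hA : A.IsHermitian) (hB : B.IsHermitian) (hAB : A ≤ B) :
    ⨅ i, hA.eigenvalues i ≤ ⨅ i, hB.eigenvalues i := by
  cases isEmpty_or_nonempty ι
  · simp [Real.iInf_of_isEmpty]
  have hmin : algebraMap ℝ _ (⨅ i, hA.eigenvalues i) ≤ A :=
    hA.algebraMap_le_iff_le_eigenvalues.2 (ciInf_le (Set.finite_range _).bddBelow)
  exact le_ciInf (hB.algebraMap_le_iff_le_eigenvalues.1 (hmin.trans hAB))

end Matrix.IsHermitian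

section

variable {n m : ℕ} {P : Matrix (Fin n) (Fin n) ℝ} {R : Matrix (Fin m) (Fin m) ℝ}
  {H : Matrix (Fin m) (Fin n) ℝ}

theorem postCov_eq_sub_sub_add (K : Matrix (Fin n) (Fin m) ℝ) :
    postCov P R H K = P - K * (H * P) - P * Hᵀ * Kᵀ + K * (H * P * Hᵀ + R) * Kᵀ := by
  simp only [postCov, transpose_sub, transpose_one, transpose_mul, Matrix.sub_mul, Matrix.mul_sub,
    Matrix.add_mul, Matrix.mul_add, Matrix.one_mul, Matrix.mul_one, Matrix.mul_assoc]
  abel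

theorem postCov_eq_postCov_kalmanGain_add (hP : P.IsSymm) (hR : R.IsSymm)
    (hS : IsUnit (H * P * Hᵀ + R).det) (K : Matrix (Fin n) (Fin m) ℝ) :
    postCov P R H K = postCov P R H (kalmanGain P R H) +
      (K - kalmanGain P R H) * (H * P * Hᵀ + R) * (K - kalmanGain P R H)ᵀ := by
  rw [postCov_eq_sub_sub_add, postCov_eq_sub_sub_add]
  set S := H * P * Hᵀ + R
  set G := kalmanGain P R H
  have hSsymm : S.IsSymm := by
    simp only [S, IsSymm, transpose_add, transpose_mul, transpose_transpose, hP.eq, hR.eq,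
      Matrix.mul_assoc]
  have hGS : G * S = P * Hᵀ := by
    rw [show G = P * Hᵀ * S⁻¹ from rfl, Matrix.mul_assoc, nonsing_inv_mul _ hS, Matrix.mul_one]
  have hSG : S * Gᵀ = H * P := by
    rw [← hSsymm.eq, ← transpose_mul, hGS, transpose_mul, hP.eq, transpose_transpose]
  have hGSX (X : Matrix (Fin m) (Fin n) ℝ) : G * (S * X) = P * (Hᵀ * X) := by
    rw [← Matrix.mul_assoc, hGS, Matrix.mul_assoc]
  have hPHG : P * (Hᵀ * Gᵀ) = G * (H * P) := by rw [← hGSX, hSG]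
  -- `S` and `G` must stay atoms: reassociating inside `S` would block the rewrites by `hGSX`.
  clear_value S G
  simp only [transpose_sub, Matrix.sub_mul, Matrix.mul_sub, Matrix.mul_assoc, hSG, hGSX, hPHG]
  abel

end

theorem smallest_eigenvalue_postCov_kalmanGain_le_general {n m : ℕ}
    (P : Matrix (Fin n) (Fin n) ℝ)
    (R : Matrix (Fin m) (Fin m) ℝ) (H : Matrix (Fin m) (Fin n) ℝ)
    (hP : P.PosDef) (hR : R.PosDef)
    (hstar : (postCov P R H (kalmanGain P R H)).IsHermitian)
    (K : Matrix (Fin n) (Fin m) ℝ) (hK : (postCov P R H K).IsHermitian) :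
    ⨅ i, hstar.eigenvalues i ≤ ⨅ i, hK.eigenvalues i := by
  have hS : (H * P * Hᵀ + R).PosDef := by
    simpa only [conjTranspose_eq_transpose_of_trivial] using
      Matrix.PosDef.posSemidef_add (hP.posSemidef.mul_mul_conjTranspose_same H) hR
  refine hstar.iInf_eigenvalues_le_of_le hK ?_
  rw [le_iff, postCov_eq_postCov_kalmanGain_add (isHermitian_iff_isSymm.1 hP.isHermitian)
    (isHermitian_iff_isSymm.1 hR.isHermitian) hS.det_pos.ne'.isUnit, add_sub_cancel_left]
  simpa only [conjTranspose_eq_transpose_of_trivial] using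
    hS.posSemidef.mul_mul_conjTranspose_same (K - kalmanGain P R H)

theorem smallest_eigenvalue_postCov_kalmanGain_le {n m : ℕ} (hn : 1 ≤ n)
    (P : Matrix (Fin n) (Fin n) ℝ)
    (R : Matrix (Fin m) (Fin m) ℝ) (H : Matrix (Fin m) (Fin n) ℝ)
    (hP : P.PosDef) (hR : R.PosDef)
    (hstar : (postCov P R H (kalmanGain P R H)).IsHermitian)
    (K : Matrix (Fin n) (Fin m) ℝ) (hK : (postCov P R H K).IsHermitian) :
    ⨅ i, hstar.eigenvalues i ≤ ⨅ i, hK.eigenvalues i :=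
  smallest_eigenvalue_postCov_kalmanGain_le_general P R H hP hR hstar K hK
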